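/- The octagon Farey map is well defined and continuous at the sector boundaries: for each i = 0,…,6 and θ = (i+1)π/8, the two branch values agree, i.e. (γ·νᵢ)[θ] = (γ·ν_{i+1})[θ]. -/
import Mathlib


open Matrix Real

/-- Inverse cotangent, taking values in `[0, π]` (in `(0, π)` on finite inputs). -/
noncomputable def arccot (x : ℝ) : ℝ := Real.pi / 2 - Real.arctan x

/-- The eight elements of the dihedral group D₈ mapping the sector
`[iπ/8, (i+1)π/8]` to `[0, π/8]`. -/
noncomputable def nuOct : Fin 8 → Matrix (Fin 2) (Fin 2) ℝ
  | 0 => !![1, 0; 0, 1]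
  | 1 => !![Real.sqrt 2 / 2, Real.sqrt 2 / 2; Real.sqrt 2 / 2, -(Real.sqrt 2 / 2)]
  | 2 => !![Real.sqrt 2 / 2, Real.sqrt 2 / 2; -(Real.sqrt 2 / 2), Real.sqrt 2 / 2]
  | 3 => !![0, 1; 1, 0]
  | 4 => !![0, 1; -1, 0]
  | 5 => !![-(Real.sqrt 2 / 2), Real.sqrt 2 / 2; Real.sqrt 2 / 2, Real.sqrt 2 / 2]
  | 6 => !![-(Real.sqrt 2 / 2), Real.sqrt 2 / 2; -(Real.sqrt 2 / 2), -(Real.sqrt 2 / 2)]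
  | 7 => !![-1, 0; 0, 1]

/-- The affine reflection γ = [[-1, 2(1+√2)], [0, 1]]. -/
noncomputable def gammaOct : Matrix (Fin 2) (Fin 2) ℝ := !![-1, 2 * (1 + Real.sqrt 2); 0, 1]

/-- The action of a 2×2 matrix on angles in `[0, π]`, by fractional linear
transformation of the cotangent: `M[θ] = arccot((a cot θ + b)/(c cot θ + d))`. -/
noncomputable def actAngle (M : Matrix (Fin 2) (Fin 2) ℝ) (θ : ℝ) : ℝ :=
  arccot ((M 0 0 * Real.cot θ + M 0 1) / (M 1 0 * Real.cot θ + M 1 1))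

/-- The index `i` of the sector `Σᵢ = [iπ/8, (i+1)π/8)` (with `Σ₇ = [7π/8, π]`)
containing `θ`. -/
noncomputable def sectorIdx (θ : ℝ) : Fin 8 :=
  if θ < Real.pi / 8 then 0
  else if θ < 2 * Real.pi / 8 then 1
  else if θ < 3 * Real.pi / 8 then 2
  else if θ < 4 * Real.pi / 8 then 3
  else if θ < 5 * Real.pi / 8 then 4
  else if θ < 6 * Real.pi / 8 then 5
  else if θ < 7 * Real.pi / 8 then 6
  else 7

/-- The octagon Farey map `F(θ) = (γ νᵢ)[θ]` for `θ ∈ Σᵢ`. -/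
noncomputable def octFarey (θ : ℝ) : ℝ := actAngle (gammaOct * nuOct (sectorIdx θ)) θ


private lemma oct_sqrt2_sq : Real.sqrt 2 * Real.sqrt 2 = 2 := Real.mul_self_sqrt (by norm_num)
private lemma oct_sqrt2_pos : (0:ℝ) < Real.sqrt 2 := Real.sqrt_pos.mpr (by norm_num)
private lemma oct_sqrt2_lt : Real.sqrt 2 < 2 := by nlinarith [oct_sqrt2_sq, oct_sqrt2_pos]

private lemma oct_cot_pi_div_eight : Real.cot (π/8) = 1 + √2 := by
  have hs : (0:ℝ) < √(2-√2) := Real.sqrt_pos.mpr (by linarith [oct_sqrt2_lt])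
  have key : √(2+√2) = (1+√2) * √(2-√2) := by
    rw [show (2+√2:ℝ) = (1+√2)^2 * (2-√2) by nlinarith [oct_sqrt2_sq]]
    rw [Real.sqrt_mul (sq_nonneg _), Real.sqrt_sq (by positivity)]
  rw [Real.cot_eq_cos_div_sin, Real.cos_pi_div_eight, Real.sin_pi_div_eight, key]
  field_simp

private lemma oct_cot_pi_div_four : Real.cot (π/4) = 1 := by
  rw [Real.cot_eq_cos_div_sin, Real.cos_pi_div_four, Real.sin_pi_div_four,
    div_self (by positivity)]

private lemma oct_cot_3pi_div_eight : Real.cot (3*π/8) = √2 - 1 := by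
  have hs : (0:ℝ) < √(2+√2) := Real.sqrt_pos.mpr (by positivity)
  have key : √(2-√2) = (√2-1) * √(2+√2) := by
    rw [show (2-√2:ℝ) = (√2-1)^2 * (2+√2) by nlinarith [oct_sqrt2_sq]]
    rw [Real.sqrt_mul (sq_nonneg _), Real.sqrt_sq (by nlinarith [oct_sqrt2_sq, oct_sqrt2_pos])]
  rw [show (3*π/8 : ℝ) = π/2 - π/8 by ring, Real.cot_eq_cos_div_sin,
    Real.cos_pi_div_two_sub, Real.sin_pi_div_two_sub,
    Real.cos_pi_div_eight, Real.sin_pi_div_eight, key]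
  field_simp

private lemma oct_cot_pi_div_two : Real.cot (π/2) = 0 := by
  rw [Real.cot_eq_cos_div_sin, Real.cos_pi_div_two, zero_div]

private lemma oct_cot_5pi_div_eight : Real.cot (5*π/8) = 1 - √2 := by
  rw [show (5*π/8 : ℝ) = π - 3*π/8 by ring, Real.cot_eq_cos_div_sin,
    Real.cos_pi_sub, Real.sin_pi_sub, neg_div, ← Real.cot_eq_cos_div_sin,
    oct_cot_3pi_div_eight]; ring

private lemma oct_cot_3pi_div_four : Real.cot (3*π/4) = -1 := by
  rw [show (3*π/4 : ℝ) = π - π/4 by ring, Real.cot_eq_cos_div_sin,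
    Real.cos_pi_sub, Real.sin_pi_sub, neg_div, ← Real.cot_eq_cos_div_sin,
    oct_cot_pi_div_four]

private lemma oct_cot_7pi_div_eight : Real.cot (7*π/8) = -(1 + √2) := by
  rw [show (7*π/8 : ℝ) = π - π/8 by ring, Real.cot_eq_cos_div_sin,
    Real.cos_pi_sub, Real.sin_pi_sub, neg_div, ← Real.cot_eq_cos_div_sin,
    oct_cot_pi_div_eight]

theorem octFarey_branches_agree_on_boundaries :
    ∀ i : Fin 7,
      actAngle (gammaOct * nuOct i.castSucc) (((i : ℕ) + 1) * Real.pi / 8) =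
      actAngle (gammaOct * nuOct i.succ) (((i : ℕ) + 1) * Real.pi / 8) := by
  have hs := oct_sqrt2_sq
  have hp := oct_sqrt2_pos
  intro i
  fin_cases i
  · show actAngle (gammaOct * nuOct (Fin.castSucc (0:Fin 7))) ((((0:Fin 7) : ℕ) + 1) * Real.pi / 8) =
      actAngle (gammaOct * nuOct (Fin.succ (0:Fin 7))) ((((0:Fin 7) : ℕ) + 1) * Real.pi / 8)
    -- i = 0,
    rw [show ((((0:Fin 7) : ℕ):ℝ) + 1) * Real.pi / 8 = π/8 by
      push_cast [show ((0:Fin 7):ℕ) = (0:ℕ) from rfl]; ring]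
    rw [show nuOct (Fin.castSucc (0:Fin 7)) = !![1,0;0,1] from rfl,
        show nuOct (Fin.succ (0:Fin 7)) = !![√2/2, √2/2; √2/2, -(√2/2)] from rfl]
    norm_num [actAngle, gammaOct, Matrix.mul_apply, Fin.sum_univ_two, oct_cot_pi_div_eight]
    congr 1
    rw [eq_div_iff (by nlinarith)]
    nlinarith
  · show actAngle (gammaOct * nuOct (Fin.castSucc (1:Fin 7))) ((((1:Fin 7) : ℕ) + 1) * Real.pi / 8) =
      actAngle (gammaOct * nuOct (Fin.succ (1:Fin 7))) ((((1:Fin 7) : ℕ) + 1) * Real.pi / 8)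
    -- i = 1,
    rw [show ((((1:Fin 7) : ℕ):ℝ) + 1) * Real.pi / 8 = π/4 by
      push_cast [show ((1:Fin 7):ℕ) = (1:ℕ) from rfl]; ring]
    rw [show nuOct (Fin.castSucc (1:Fin 7)) = !![√2/2, √2/2; √2/2, -(√2/2)] from rfl,
        show nuOct (Fin.succ (1:Fin 7)) = !![√2/2, √2/2; -(√2/2), √2/2] from rfl]
    norm_num [actAngle, gammaOct, Matrix.mul_apply, Fin.sum_univ_two, oct_cot_pi_div_four]
  · show actAngle (gammaOct * nuOct (Fin.castSucc (2:Fin 7))) ((((2:Fin 7) : ℕ) + 1) * Real.pi / 8) =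
      actAngle (gammaOct * nuOct (Fin.succ (2:Fin 7))) ((((2:Fin 7) : ℕ) + 1) * Real.pi / 8)
    -- i = 2,
    rw [show ((((2:Fin 7) : ℕ):ℝ) + 1) * Real.pi / 8 = 3*π/8 by
      push_cast [show ((2:Fin 7):ℕ) = (2:ℕ) from rfl]; ring]
    rw [show nuOct (Fin.castSucc (2:Fin 7)) = !![√2/2, √2/2; -(√2/2), √2/2] from rfl,
        show nuOct (Fin.succ (2:Fin 7)) = !![0,1;1,0] from rfl]
    norm_num [actAngle, gammaOct, Matrix.mul_apply, Fin.sum_univ_two, oct_cot_3pi_div_eight]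
    congr 1
    rw [div_eq_div_iff (by nlinarith) (by nlinarith)]
    nlinarith
  · show actAngle (gammaOct * nuOct (Fin.castSucc (3:Fin 7))) ((((3:Fin 7) : ℕ) + 1) * Real.pi / 8) =
      actAngle (gammaOct * nuOct (Fin.succ (3:Fin 7))) ((((3:Fin 7) : ℕ) + 1) * Real.pi / 8)
    -- i = 3,
    rw [show ((((3:Fin 7) : ℕ):ℝ) + 1) * Real.pi / 8 = π/2 by
      push_cast [show ((3:Fin 7):ℕ) = (3:ℕ) from rfl]; ring]
    rw [show nuOct (Fin.castSucc (3:Fin 7)) = !![0,1;1,0] from rfl,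
        show nuOct (Fin.succ (3:Fin 7)) = !![0,1;-1,0] from rfl]
    norm_num [actAngle, gammaOct, Matrix.mul_apply, Fin.sum_univ_two, oct_cot_pi_div_two]
  · show actAngle (gammaOct * nuOct (Fin.castSucc (4:Fin 7))) ((((4:Fin 7) : ℕ) + 1) * Real.pi / 8) =
      actAngle (gammaOct * nuOct (Fin.succ (4:Fin 7))) ((((4:Fin 7) : ℕ) + 1) * Real.pi / 8)
    -- i = 4,
    rw [show ((((4:Fin 7) : ℕ):ℝ) + 1) * Real.pi / 8 = 5*π/8 by
      push_cast [show ((4:Fin 7):ℕ) = (4:ℕ) from rfl]; ring]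
    rw [show nuOct (Fin.castSucc (4:Fin 7)) = !![0,1;-1,0] from rfl,
        show nuOct (Fin.succ (4:Fin 7)) = !![-(√2/2), √2/2; √2/2, √2/2] from rfl]
    norm_num [actAngle, gammaOct, Matrix.mul_apply, Fin.sum_univ_two, oct_cot_5pi_div_eight]
    congr 1
    rw [div_eq_div_iff (by nlinarith) (by nlinarith)]
    nlinarith
  · show actAngle (gammaOct * nuOct (Fin.castSucc (5:Fin 7))) ((((5:Fin 7) : ℕ) + 1) * Real.pi / 8) =
      actAngle (gammaOct * nuOct (Fin.succ (5:Fin 7))) ((((5:Fin 7) : ℕ) + 1) * Real.pi / 8)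
    -- i = 5,
    rw [show ((((5:Fin 7) : ℕ):ℝ) + 1) * Real.pi / 8 = 3*π/4 by
      push_cast [show ((5:Fin 7):ℕ) = (5:ℕ) from rfl]; ring]
    rw [show nuOct (Fin.castSucc (5:Fin 7)) = !![-(√2/2), √2/2; √2/2, √2/2] from rfl,
        show nuOct (Fin.succ (5:Fin 7)) = !![-(√2/2), √2/2; -(√2/2), -(√2/2)] from rfl]
    norm_num [actAngle, gammaOct, Matrix.mul_apply, Fin.sum_univ_two, oct_cot_3pi_div_four]
  · show actAngle (gammaOct * nuOct (Fin.castSucc (6:Fin 7))) ((((6:Fin 7) : ℕ) + 1) * Real.pi / 8) =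
      actAngle (gammaOct * nuOct (Fin.succ (6:Fin 7))) ((((6:Fin 7) : ℕ) + 1) * Real.pi / 8)
    -- i = 6,
    rw [show ((((6:Fin 7) : ℕ):ℝ) + 1) * Real.pi / 8 = 7*π/8 by
      push_cast [show ((6:Fin 7):ℕ) = (6:ℕ) from rfl]; ring]
    rw [show nuOct (Fin.castSucc (6:Fin 7)) = !![-(√2/2), √2/2; -(√2/2), -(√2/2)] from rfl,
        show nuOct (Fin.succ (6:Fin 7)) = !![-1,0;0,1] from rfl]
    norm_num [actAngle, gammaOct, Matrix.mul_apply, Fin.sum_univ_two, oct_cot_7pi_div_eight]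
    congr 1
    rw [div_eq_iff (by nlinarith)]
    nlinarith
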